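/- Bregman objective identity: let g : ℝ → ℝ be differentiable and strictly convex, and let α₀ be the Riesz representer of a continuous linear functional m, i.e. E[m(W,γ)] = E[α₀(X)γ(X)] for all square-integrable γ. Then the average Bregman divergence E[g(α₀(X)) − g(α(X)) − g′(α(X))(α₀(X) − α(X))] equals E[−g(α(X)) + g′(α(X))α(X) − m(W, g′∘α)] + E[g(α₀(X))], so the two objectives have the same minimizers over any class of candidate functions α. -/

import Mathlib

/-!
Pointwise, the Bregman integrand minus the feasible integrand minus `g (α₀ X)` is
`m (g' ∘ α) - α₀ X · g'(α X)`, whose expectation vanishes because `α₀` represents `m` and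
`g' ∘ α` is square integrable. So the two objectives differ by the constant `E[g (α₀ X)]`,
which does not depend on the candidate and hence does not affect minimizers.
-/

open MeasureTheory

section Riesz

variable {Ω 𝒳 : Type*} [MeasurableSpace Ω] {μ : Measure Ω} {X : Ω → 𝒳}

def IsRieszRepresenter (μ : Measure Ω) (X : Ω → 𝒳) (m : (𝒳 → ℝ) → Ω → ℝ) (α₀ : 𝒳 → ℝ) :
    Prop :=
  ∀ γ : 𝒳 → ℝ, MemLp (fun ω => γ (X ω)) 2 μ →
    ∫ ω, m γ ω ∂μ = ∫ ω, α₀ (X ω) * γ (X ω) ∂μ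

theorem IsRieszRepresenter.integral_sub_mul_eq_zero {m : (𝒳 → ℝ) → Ω → ℝ} {α₀ γ : 𝒳 → ℝ}
    (hR : IsRieszRepresenter μ X m α₀) (hα₀ : MemLp (fun ω => α₀ (X ω)) 2 μ)
    (hγ : MemLp (fun ω => γ (X ω)) 2 μ)
    (hresidual : Integrable (fun ω => m γ ω - α₀ (X ω) * γ (X ω)) μ) :
    ∫ ω, (m γ ω - α₀ (X ω) * γ (X ω)) ∂μ = 0 := by
  have hprod : Integrable (fun ω => α₀ (X ω) * γ (X ω)) μ := hα₀.integrable_mul hγ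
  have hm : Integrable (m γ) μ := (hresidual.add hprod).congr (.of_forall fun ω => by simp)
  rw [integral_sub hm hprod, hR γ hγ, sub_self]

theorem IsRieszRepresenter.integral_bregman_eq {m : (𝒳 → ℝ) → Ω → ℝ} {α₀ α : 𝒳 → ℝ}
    {g : ℝ → ℝ} (hR : IsRieszRepresenter μ X m α₀) (hα₀ : MemLp (fun ω => α₀ (X ω)) 2 μ)
    (hg'α : MemLp (fun ω => deriv g (α (X ω))) 2 μ)
    (hbreg : Integrable (fun ω => g (α₀ (X ω)) - g (α (X ω)) -
      deriv g (α (X ω)) * (α₀ (X ω) - α (X ω))) μ)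
    (hobj : Integrable (fun ω => -g (α (X ω)) + deriv g (α (X ω)) * α (X ω) -
      m (fun x => deriv g (α x)) ω) μ)
    (hgα₀ : Integrable (fun ω => g (α₀ (X ω))) μ) :
    ∫ ω, (g (α₀ (X ω)) - g (α (X ω)) - deriv g (α (X ω)) * (α₀ (X ω) - α (X ω))) ∂μ =
      (∫ ω, (-g (α (X ω)) + deriv g (α (X ω)) * α (X ω) -
        m (fun x => deriv g (α x)) ω) ∂μ) + ∫ ω, g (α₀ (X ω)) ∂μ := by
  have hdecomp : ∀ ω, g (α₀ (X ω)) - g (α (X ω)) - deriv g (α (X ω)) * (α₀ (X ω) - α (X ω)) =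
      -g (α (X ω)) + deriv g (α (X ω)) * α (X ω) - m (fun x => deriv g (α x)) ω
        + g (α₀ (X ω)) + (m (fun x => deriv g (α x)) ω - α₀ (X ω) * deriv g (α (X ω))) :=
    fun ω => by ring
  have hresidual : Integrable
      (fun ω => m (fun x => deriv g (α x)) ω - α₀ (X ω) * deriv g (α (X ω))) μ :=
    ((hbreg.sub hobj).sub hgα₀).congr
      (.of_forall fun ω => by simp only [Pi.sub_apply, hdecomp]; ring)
  rw [integral_congr_ae (.of_forall hdecomp),
    integral_add (hobj.add hgα₀ : Integrable (fun ω => _ + _) μ) hresidual,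
    integral_add hobj hgα₀, hR.integral_sub_mul_eq_zero hα₀ hg'α hresidual, add_zero]

end Riesz

theorem forall_le_iff_of_eq_add_const {ι α : Type*} [AddCommGroup α] [PartialOrder α]
    [IsOrderedAddMonoid α] {s : Set ι} {F G : ι → α} {c : α} (hFG : ∀ i ∈ s, F i = G i + c)
    {a : ι} (ha : a ∈ s) : (∀ i ∈ s, F a ≤ F i) ↔ ∀ i ∈ s, G a ≤ G i := by
  refine forall₂_congr fun i hi => ?_
  rw [hFG a ha, hFG i hi, add_le_add_iff_right]

theorem stmt9_general {Ω 𝒳 : Type*} [MeasurableSpace Ω] [MeasurableSpace 𝒳]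
    (μ : Measure Ω)
    (X : Ω → 𝒳) (m : (𝒳 → ℝ) → Ω → ℝ) (α₀ : 𝒳 → ℝ) (g : ℝ → ℝ)
    (hα₀ : MemLp (fun ω => α₀ (X ω)) 2 μ)
    -- α₀ is the Riesz representer of the continuous linear functional m
    (hRiesz : ∀ γ : 𝒳 → ℝ, MemLp (fun ω => γ (X ω)) 2 μ →
      ∫ ω, m γ ω ∂μ = ∫ ω, α₀ (X ω) * γ (X ω) ∂μ)
    -- integrability for the candidate α and the derived functions
    (α : 𝒳 → ℝ)
    (hg'α : MemLp (fun ω => deriv g (α (X ω))) 2 μ)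
    (hint1 : Integrable (fun ω => g (α₀ (X ω)) - g (α (X ω)) -
      deriv g (α (X ω)) * (α₀ (X ω) - α (X ω))) μ)
    (hint2 : Integrable (fun ω => -g (α (X ω)) + deriv g (α (X ω)) * α (X ω) -
      m (fun x => deriv g (α x)) ω) μ)
    (hint3 : Integrable (fun ω => g (α₀ (X ω))) μ) :
    -- the identity
    (∫ ω, (g (α₀ (X ω)) - g (α (X ω)) - deriv g (α (X ω)) * (α₀ (X ω) - α (X ω))) ∂μ =
      (∫ ω, (-g (α (X ω)) + deriv g (α (X ω)) * α (X ω) -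
        m (fun x => deriv g (α x)) ω) ∂μ) + ∫ ω, g (α₀ (X ω)) ∂μ) ∧
    -- hence the two objectives have the same minimizers over any candidate class 𝒜
    (∀ 𝒜 : Set (𝒳 → ℝ),
      (∀ β ∈ 𝒜, MemLp (fun ω => β (X ω)) 2 μ ∧
        MemLp (fun ω => deriv g (β (X ω))) 2 μ ∧
        Integrable (fun ω => g (α₀ (X ω)) - g (β (X ω)) -
          deriv g (β (X ω)) * (α₀ (X ω) - β (X ω))) μ ∧
        Integrable (fun ω => -g (β (X ω)) + deriv g (β (X ω)) * β (X ω) -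
          m (fun x => deriv g (β x)) ω) μ) →
      ∀ αs ∈ 𝒜,
        ((∀ β ∈ 𝒜,
          ∫ ω, (g (α₀ (X ω)) - g (αs (X ω)) - deriv g (αs (X ω)) * (α₀ (X ω) - αs (X ω))) ∂μ ≤
          ∫ ω, (g (α₀ (X ω)) - g (β (X ω)) - deriv g (β (X ω)) * (α₀ (X ω) - β (X ω))) ∂μ) ↔
        (∀ β ∈ 𝒜,
          ∫ ω, (-g (αs (X ω)) + deriv g (αs (X ω)) * αs (X ω) -
            m (fun x => deriv g (αs x)) ω) ∂μ ≤
          ∫ ω, (-g (β (X ω)) + deriv g (β (X ω)) * β (X ω) -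
            m (fun x => deriv g (β x)) ω) ∂μ))) := by
  have hR : IsRieszRepresenter μ X m α₀ := hRiesz
  refine ⟨hR.integral_bregman_eq hα₀ hg'α hint1 hint2 hint3, fun 𝒜 h𝒜 αs hαs => ?_⟩
  apply forall_le_iff_of_eq_add_const (c := ∫ ω, g (α₀ (X ω)) ∂μ) ?_ hαs
  intro β hβ
  obtain ⟨-, hg'β, hbreg, hobj⟩ := h𝒜 β hβ
  exact hR.integral_bregman_eq hα₀ hg'β hbreg hobj hint3

/-- Bregman objective identity for generalized Riesz regression: the average Bregman
divergence to the Riesz representer α₀ equals the feasible objective plus a constant,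
so the two objectives have the same minimizers over any class of candidate functions. -/
theorem stmt9 {Ω 𝒳 : Type*} [MeasurableSpace Ω] [MeasurableSpace 𝒳]
    (μ : Measure Ω) [IsProbabilityMeasure μ]
    (X : Ω → 𝒳) (m : (𝒳 → ℝ) → Ω → ℝ) (α₀ : 𝒳 → ℝ) (g : ℝ → ℝ)
    (hg : Differentiable ℝ g) (hgc : StrictConvexOn ℝ Set.univ g)
    (hα₀ : MemLp (fun ω => α₀ (X ω)) 2 μ)
    -- α₀ is the Riesz representer of the continuous linear functional m
    (hRiesz : ∀ γ : 𝒳 → ℝ, MemLp (fun ω => γ (X ω)) 2 μ →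
      ∫ ω, m γ ω ∂μ = ∫ ω, α₀ (X ω) * γ (X ω) ∂μ)
    -- integrability for the candidate α and the derived functions
    (α : 𝒳 → ℝ)
    (hα : MemLp (fun ω => α (X ω)) 2 μ)
    (hg'α : MemLp (fun ω => deriv g (α (X ω))) 2 μ)
    (hint1 : Integrable (fun ω => g (α₀ (X ω)) - g (α (X ω)) -
      deriv g (α (X ω)) * (α₀ (X ω) - α (X ω))) μ)
    (hint2 : Integrable (fun ω => -g (α (X ω)) + deriv g (α (X ω)) * α (X ω) -
      m (fun x => deriv g (α x)) ω) μ)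
    (hint3 : Integrable (fun ω => g (α₀ (X ω))) μ) :
    -- the identity
    (∫ ω, (g (α₀ (X ω)) - g (α (X ω)) - deriv g (α (X ω)) * (α₀ (X ω) - α (X ω))) ∂μ =
      (∫ ω, (-g (α (X ω)) + deriv g (α (X ω)) * α (X ω) -
        m (fun x => deriv g (α x)) ω) ∂μ) + ∫ ω, g (α₀ (X ω)) ∂μ) ∧
    -- hence the two objectives have the same minimizers over any candidate class 𝒜
    (∀ 𝒜 : Set (𝒳 → ℝ),
      (∀ β ∈ 𝒜, MemLp (fun ω => β (X ω)) 2 μ ∧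
        MemLp (fun ω => deriv g (β (X ω))) 2 μ ∧
        Integrable (fun ω => g (α₀ (X ω)) - g (β (X ω)) -
          deriv g (β (X ω)) * (α₀ (X ω) - β (X ω))) μ ∧
        Integrable (fun ω => -g (β (X ω)) + deriv g (β (X ω)) * β (X ω) -
          m (fun x => deriv g (β x)) ω) μ) →
      ∀ αs ∈ 𝒜,
        ((∀ β ∈ 𝒜,
          ∫ ω, (g (α₀ (X ω)) - g (αs (X ω)) - deriv g (αs (X ω)) * (α₀ (X ω) - αs (X ω))) ∂μ ≤
          ∫ ω, (g (α₀ (X ω)) - g (β (X ω)) - deriv g (β (X ω)) * (α₀ (X ω) - β (X ω))) ∂μ) ↔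
        (∀ β ∈ 𝒜,
          ∫ ω, (-g (αs (X ω)) + deriv g (αs (X ω)) * αs (X ω) -
            m (fun x => deriv g (αs x)) ω) ∂μ ≤
          ∫ ω, (-g (β (X ω)) + deriv g (β (X ω)) * β (X ω) -
            m (fun x => deriv g (β x)) ω) ∂μ))) :=
  stmt9_general μ X m α₀ g hα₀ hRiesz α hg'α hint1 hint2 hint3
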